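/- In A(F) as above, the element Λ_L = (1 + ã + ã²) b̃² c̃² is a left integral in A(F) (i.e. x Λ_L = ε(x) Λ_L for all x ∈ A(F)), the element Λ_R = b̃² c̃² (1 + ã + ã²) is a right integral (Λ_R x = ε(x) Λ_R for all x), and Λ_L is not a scalar multiple of Λ_R. Moreover ε(Λ_L) = 0, so A(F) is not a semisimple algebra. -/

import Mathlib

noncomputable section

/-- `q = e^{2πi/3}`, a primitive cube root of unity. -/
def qc : ℂ := Complex.exp (2 * Real.pi * Complex.I / 3)

/-- generators `a, b, c, d` of the free algebra. -/
def ga : FreeAlgebra ℂ (Fin 4) := FreeAlgebra.ι ℂ 0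
def gb : FreeAlgebra ℂ (Fin 4) := FreeAlgebra.ι ℂ 1
def gc : FreeAlgebra ℂ (Fin 4) := FreeAlgebra.ι ℂ 2
def gd : FreeAlgebra ℂ (Fin 4) := FreeAlgebra.ι ℂ 3

/-- The defining relations of `A(SL_q(2))`. -/
inductive SLqRel : FreeAlgebra ℂ (Fin 4) → FreeAlgebra ℂ (Fin 4) → Prop
  | ab : SLqRel (ga * gb) (qc • (gb * ga))
  | ac : SLqRel (ga * gc) (qc • (gc * ga))
  | bd : SLqRel (gb * gd) (qc • (gd * gb))
  | bc : SLqRel (gb * gc) (gc * gb)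
  | cd : SLqRel (gc * gd) (qc • (gd * gc))
  | comm : SLqRel (ga * gd - gd * ga) ((qc - qc⁻¹) • (gb * gc))
  | det : SLqRel (ga * gd - qc • (gb * gc)) 1
  | det' : SLqRel (gd * ga - qc⁻¹ • (gb * gc)) 1

/-- the coordinate algebra `A(SL_q(2))` at `q = e^{2πi/3}`. -/
abbrev ASLq : Type := RingQuot SLqRel

def a' : ASLq := RingQuot.mkAlgHom ℂ SLqRel ga
def b' : ASLq := RingQuot.mkAlgHom ℂ SLqRel gb
def c' : ASLq := RingQuot.mkAlgHom ℂ SLqRel gc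
def d' : ASLq := RingQuot.mkAlgHom ℂ SLqRel gd

/-- The relations defining the quotient `A(F)` of `A(SL_q(2))`:
`a³ = 1`, `b³ = 0`, `c³ = 0`, `d³ = 1`. -/
inductive FRel : ASLq → ASLq → Prop
  | a : FRel (a' ^ 3) 1
  | b : FRel (b' ^ 3) 0
  | c : FRel (c' ^ 3) 0
  | d : FRel (d' ^ 3) 1

/-- the 27-dimensional Hopf algebra `A(F)`. -/
abbrev AF : Type := RingQuot FRel

def ta : AF := RingQuot.mkAlgHom ℂ FRel a'
def tb : AF := RingQuot.mkAlgHom ℂ FRel b'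
def tc : AF := RingQuot.mkAlgHom ℂ FRel c'
def td : AF := RingQuot.mkAlgHom ℂ FRel d'

/-! ### facts about `qc` -/

lemma hq3 : qc ^ 3 = 1 := by
  rw [qc, ← Complex.exp_nat_mul]
  rw [show (3:ℕ) * (2 * ↑Real.pi * Complex.I / 3) = 2 * ↑Real.pi * Complex.I by ring]
  exact Complex.exp_two_pi_mul_I

lemma hq1 : qc ≠ 1 := by
  rw [qc]
  intro h
  rw [Complex.exp_eq_one_iff] at h
  obtain ⟨n, hn⟩ := h
  have hI := Complex.I_ne_zero
  have hpi : (Real.pi:ℂ) ≠ 0 := Complex.ofReal_ne_zero.mpr Real.pi_ne_zero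
  have h3 : (n:ℂ) * 3 = 1 := by
    field_simp at hn
    have h2 : (2*(Real.pi:ℂ)*Complex.I) * (1 - (n:ℂ)*3) = 0 := by linear_combination (2*(Real.pi:ℂ)*Complex.I) * hn
    rcases mul_eq_zero.mp h2 with h | h
    · exact absurd h (by simp [hpi, hI])
    · linear_combination -h
  have : (n * 3 : ℤ) = 1 := by exact_mod_cast h3
  omega

lemma hqsum : qc ^ 2 + qc + 1 = 0 := by
  have h : (qc - 1) * (qc ^ 2 + qc + 1) = 0 := by linear_combination hq3
  rcases mul_eq_zero.mp h with h1 | h2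
  · exact absurd (by linear_combination h1) hq1
  · exact h2

lemma hqinv : qc⁻¹ = qc ^ 2 := inv_eq_of_mul_eq_one_right (by linear_combination hq3)

/-! ### relations in AF -/

/-- the canonical projection from the free algebra to `AF`. -/
def pr : FreeAlgebra ℂ (Fin 4) →ₐ[ℂ] AF :=
  (RingQuot.mkAlgHom ℂ FRel).comp (RingQuot.mkAlgHom ℂ SLqRel)

lemma pr_ga : pr ga = ta := rfl
lemma pr_gb : pr gb = tb := rfl
lemma pr_gc : pr gc = tc := rfl
lemma pr_gd : pr gd = td := rfl

lemma pr_rel {x y : FreeAlgebra ℂ (Fin 4)} (h : SLqRel x y) : pr x = pr y := by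
  simp only [pr, AlgHom.comp_apply, RingQuot.mkAlgHom_rel ℂ h]

lemma rel_ab : ta * tb = qc • (tb * ta) := by
  have := pr_rel SLqRel.ab; simpa only [map_mul, map_smul, pr_ga, pr_gb] using this
lemma rel_ac : ta * tc = qc • (tc * ta) := by
  have := pr_rel SLqRel.ac; simpa only [map_mul, map_smul, pr_ga, pr_gc] using this
lemma rel_bd : tb * td = qc • (td * tb) := by
  have := pr_rel SLqRel.bd; simpa only [map_mul, map_smul, pr_gb, pr_gd] using this
lemma rel_bc : tb * tc = tc * tb := by
  have := pr_rel SLqRel.bc; simpa only [map_mul, pr_gb, pr_gc] using this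
lemma rel_cd : tc * td = qc • (td * tc) := by
  have := pr_rel SLqRel.cd; simpa only [map_mul, map_smul, pr_gc, pr_gd] using this
lemma rel_det : ta * td - qc • (tb * tc) = 1 := by
  have := pr_rel SLqRel.det
  simpa only [map_sub, map_mul, map_smul, map_one, pr_ga, pr_gb, pr_gc, pr_gd] using this

lemma rel_a3 : ta ^ 3 = 1 := by
  have := RingQuot.mkAlgHom_rel ℂ FRel.a
  simpa only [map_pow, map_one, ta] using this
lemma rel_b3 : tb ^ 3 = 0 := by
  have := RingQuot.mkAlgHom_rel ℂ FRel.b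
  simpa only [map_pow, map_zero, tb] using this
lemma rel_c3 : tc ^ 3 = 0 := by
  have := RingQuot.mkAlgHom_rel ℂ FRel.c
  simpa only [map_pow, map_zero, tc] using this
lemma rel_d3 : td ^ 3 = 1 := by
  have := RingQuot.mkAlgHom_rel ℂ FRel.d
  simpa only [map_pow, map_one, td] using this

/-- `d = a²(1 + q bc)` -/
lemma d_eq : td = ta ^ 2 * (1 + qc • (tb * tc)) := by
  have h1 : ta * td = 1 + qc • (tb * tc) := by rw [← rel_det]; abel
  calc td = ta ^ 3 * td := by rw [rel_a3, one_mul]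
    _ = ta ^ 2 * (ta * td) := by noncomm_ring
    _ = ta ^ 2 * (1 + qc • (tb * tc)) := by rw [h1]

/-! ### commutation helpers -/

lemma rel_ba : tb * ta = qc ^ 2 • (ta * tb) := by
  have : qc ^ 2 • (ta * tb) = qc ^ 2 • (qc • (tb * ta)) := by rw [rel_ab]
  rw [this, smul_smul, ← pow_succ, hq3, one_smul]
lemma rel_ca : tc * ta = qc ^ 2 • (ta * tc) := by
  have : qc ^ 2 • (ta * tc) = qc ^ 2 • (qc • (tc * ta)) := by rw [rel_ac]
  rw [this, smul_smul, ← pow_succ, hq3, one_smul]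

lemma rel_ba2 : tb * ta ^ 2 = qc • (ta ^ 2 * tb) := by
  have h : tb * ta ^ 2 = (tb * ta) * ta := by noncomm_ring
  rw [h, rel_ba, smul_mul_assoc, mul_assoc, rel_ba, mul_smul_comm, smul_smul]
  have : qc ^ 2 * qc ^ 2 = qc * qc ^ 3 := by noncomm_ring
  rw [this, hq3, mul_one]
  congr 1
  noncomm_ring
lemma rel_ca2 : tc * ta ^ 2 = qc • (ta ^ 2 * tc) := by
  have h : tc * ta ^ 2 = (tc * ta) * ta := by noncomm_ring
  rw [h, rel_ca, smul_mul_assoc, mul_assoc, rel_ca, mul_smul_comm, smul_smul]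
  have : qc ^ 2 * qc ^ 2 = qc * qc ^ 3 := by noncomm_ring
  rw [this, hq3, mul_one]
  congr 1
  noncomm_ring

lemma rel_a2b : ta ^ 2 * tb = qc ^ 2 • (tb * ta ^ 2) := by
  rw [rel_ba2, smul_smul]
  have : qc ^ 2 * qc = qc ^ 3 := by noncomm_ring
  rw [this, hq3, one_smul]
lemma rel_a2c : ta ^ 2 * tc = qc ^ 2 • (tc * ta ^ 2) := by
  rw [rel_ca2, smul_smul]
  have : qc ^ 2 * qc = qc ^ 3 := by noncomm_ring
  rw [this, hq3, one_smul]

/-! ### the integral identities on generators -/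

def ΛL : AF := (1 + ta + ta ^ 2) * tb ^ 2 * tc ^ 2
def ΛR : AF := tb ^ 2 * tc ^ 2 * (1 + ta + ta ^ 2)

lemma La : ta * ΛL = ΛL := by
  have h : ta * ΛL = (ta + ta ^ 2 + ta ^ 3) * tb ^ 2 * tc ^ 2 := by rw [ΛL]; noncomm_ring
  rw [h, rel_a3, ΛL]
  noncomm_ring

lemma Lb : tb * ΛL = 0 := by
  have h : tb * ΛL = (tb + tb * ta + tb * ta ^ 2) * (tb ^ 2 * tc ^ 2) := by rw [ΛL]; noncomm_ring
  rw [h, rel_ba, rel_ba2]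
  have e1 : tb * (tb ^ 2 * tc ^ 2) = tb ^ 3 * tc ^ 2 := by noncomm_ring
  have e2 : (ta * tb) * (tb ^ 2 * tc ^ 2) = ta * (tb ^ 3 * tc ^ 2) := by noncomm_ring
  have e3 : (ta ^ 2 * tb) * (tb ^ 2 * tc ^ 2) = ta ^ 2 * (tb ^ 3 * tc ^ 2) := by noncomm_ring
  rw [add_mul, add_mul, smul_mul_assoc, smul_mul_assoc, e1, e2, e3, rel_b3]
  simp

lemma Lc : tc * ΛL = 0 := by
  have h : tc * ΛL = (tc + tc * ta + tc * ta ^ 2) * (tb ^ 2 * tc ^ 2) := by rw [ΛL]; noncomm_ring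
  have hcb : tc * tb = tb * tc := (rel_bc).symm
  have hcbb : tc * (tb ^ 2 * tc ^ 2) = tb ^ 2 * tc ^ 3 := by
    calc tc * (tb ^ 2 * tc ^ 2) = (tc * tb) * (tb * tc ^ 2) := by noncomm_ring
      _ = (tb * tc) * (tb * tc ^ 2) := by rw [hcb]
      _ = tb * ((tc * tb) * tc ^ 2) := by noncomm_ring
      _ = tb * ((tb * tc) * tc ^ 2) := by rw [hcb]
      _ = tb ^ 2 * tc ^ 3 := by noncomm_ring
  rw [h, rel_ca, rel_ca2]
  have e2 : (ta * tc) * (tb ^ 2 * tc ^ 2) = ta * (tc * (tb ^ 2 * tc ^ 2)) := by noncomm_ring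
  have e3 : (ta ^ 2 * tc) * (tb ^ 2 * tc ^ 2) = ta ^ 2 * (tc * (tb ^ 2 * tc ^ 2)) := by noncomm_ring
  rw [add_mul, add_mul, smul_mul_assoc, smul_mul_assoc, e2, e3, hcbb, rel_c3]
  simp

lemma Ld : td * ΛL = ΛL := by
  have hbc : (tb * tc) * ΛL = 0 := by
    rw [mul_assoc, Lc, mul_zero]
  have ha2 : ta ^ 2 * ΛL = ΛL := by
    have : ta ^ 2 * ΛL = ta * (ta * ΛL) := by noncomm_ring
    rw [this, La, La]
  calc td * ΛL = ta ^ 2 * (1 + qc • (tb * tc)) * ΛL := by rw [← d_eq]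
    _ = ta ^ 2 * ΛL + qc • (ta ^ 2 * ((tb * tc) * ΛL)) := by
        rw [mul_add, mul_one, add_mul, mul_smul_comm, smul_mul_assoc, mul_assoc]
    _ = ΛL := by rw [ha2, hbc, mul_zero, smul_zero, add_zero]

lemma Ra : ΛR * ta = ΛR := by
  have h : ΛR * ta = tb ^ 2 * tc ^ 2 * (ta + ta ^ 2 + ta ^ 3) := by rw [ΛR]; noncomm_ring
  rw [h, rel_a3, ΛR]
  noncomm_ring

lemma Rb : ΛR * tb = 0 := by
  have h : ΛR * tb = (tb ^ 2 * tc ^ 2) * (tb + ta * tb + ta ^ 2 * tb) := by rw [ΛR]; noncomm_ring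
  have hcb : tc * tb = tb * tc := (rel_bc).symm
  have hcc : (tb ^ 2 * tc ^ 2) * tb = tb ^ 3 * tc ^ 2 := by
    calc (tb ^ 2 * tc ^ 2) * tb = tb ^ 2 * (tc * (tc * tb)) := by noncomm_ring
      _ = tb ^ 2 * (tc * (tb * tc)) := by rw [hcb]
      _ = tb ^ 2 * ((tc * tb) * tc) := by noncomm_ring
      _ = tb ^ 2 * ((tb * tc) * tc) := by rw [hcb]
      _ = tb ^ 3 * tc ^ 2 := by noncomm_ring
  rw [h, rel_ab, rel_a2b]
  rw [mul_add, mul_add, mul_smul_comm, mul_smul_comm]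
  have e2 : (tb ^ 2 * tc ^ 2) * (tb * ta) = ((tb ^ 2 * tc ^ 2) * tb) * ta := by noncomm_ring
  have e3 : (tb ^ 2 * tc ^ 2) * (tb * ta ^ 2) = ((tb ^ 2 * tc ^ 2) * tb) * ta ^ 2 := by noncomm_ring
  rw [e2, e3, hcc, rel_b3]
  simp

lemma Rc : ΛR * tc = 0 := by
  have h : ΛR * tc = (tb ^ 2 * tc ^ 2) * (tc + ta * tc + ta ^ 2 * tc) := by rw [ΛR]; noncomm_ring
  have hcc : (tb ^ 2 * tc ^ 2) * tc = tb ^ 2 * tc ^ 3 := by noncomm_ring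
  rw [h, rel_ac, rel_a2c]
  rw [mul_add, mul_add, mul_smul_comm, mul_smul_comm]
  have e2 : (tb ^ 2 * tc ^ 2) * (tc * ta) = ((tb ^ 2 * tc ^ 2) * tc) * ta := by noncomm_ring
  have e3 : (tb ^ 2 * tc ^ 2) * (tc * ta ^ 2) = ((tb ^ 2 * tc ^ 2) * tc) * ta ^ 2 := by noncomm_ring
  rw [e2, e3, hcc, rel_c3]
  simp

lemma Rd : ΛR * td = ΛR := by
  have hbc : ΛR * (tb * tc) = 0 := by
    rw [← mul_assoc, Rb, zero_mul]
  have key : ΛR * ta ^ 2 = ΛR := by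
    have : ΛR * ta ^ 2 = (ΛR * ta) * ta := by noncomm_ring
    rw [this, Ra, Ra]
  calc ΛR * td = ΛR * (ta ^ 2 * (1 + qc • (tb * tc))) := by rw [← d_eq]
    _ = ΛR * ta ^ 2 + qc • (ΛR * ta ^ 2 * (tb * tc)) := by
        rw [← mul_assoc, mul_add, mul_one, mul_smul_comm]
    _ = ΛR := by rw [key, hbc, smul_zero, add_zero]

/-! ### power lemmas -/

lemma hqsub : qc ^ 2 = -qc - 1 := by linear_combination hqsum

lemma hq4 : qc ^ 4 = qc := by linear_combination qc * hq3
lemma hq5 : qc ^ 5 = qc ^ 2 := by linear_combination qc^2 * hq3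
lemma hq6 : qc ^ 6 = 1 := by linear_combination (qc^3+1) * hq3
lemma hq7 : qc ^ 7 = qc := by linear_combination (qc^4+qc) * hq3
lemma hq8 : qc ^ 8 = qc ^ 2 := by linear_combination (qc^5+qc^2) * hq3
lemma hq9 : qc ^ 9 = 1 := by linear_combination (qc^6+qc^3+1) * hq3
lemma hq10 : qc ^ 10 = qc := by linear_combination (qc^7+qc^4+qc) * hq3
lemma hq11 : qc ^ 11 = qc ^ 2 := by linear_combination (qc^8+qc^5+qc^2) * hq3
lemma hq12 : qc ^ 12 = 1 := by linear_combination (qc^9+qc^6+qc^3+1) * hq3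

lemma hq13 : qc ^ 13 = qc := by linear_combination (qc + qc ^ 4 + qc ^ 7 + qc ^ 10) * hq3
lemma hq14 : qc ^ 14 = qc ^ 2 := by linear_combination (qc ^ 2 + qc ^ 5 + qc ^ 8 + qc ^ 11) * hq3
lemma hq15 : qc ^ 15 = 1 := by linear_combination (1 + qc ^ 3 + qc ^ 6 + qc ^ 9 + qc ^ 12) * hq3
lemma hq16 : qc ^ 16 = qc := by linear_combination (qc + qc ^ 4 + qc ^ 7 + qc ^ 10 + qc ^ 13) * hq3
lemma hq17 : qc ^ 17 = qc ^ 2 := by linear_combination (qc ^ 2 + qc ^ 5 + qc ^ 8 + qc ^ 11 + qc ^ 14) * hq3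
lemma hq18 : qc ^ 18 = 1 := by linear_combination (1 + qc ^ 3 + qc ^ 6 + qc ^ 9 + qc ^ 12 + qc ^ 15) * hq3
lemma hq19 : qc ^ 19 = qc := by linear_combination (qc + qc ^ 4 + qc ^ 7 + qc ^ 10 + qc ^ 13 + qc ^ 16) * hq3
lemma hq20 : qc ^ 20 = qc ^ 2 := by linear_combination (qc ^ 2 + qc ^ 5 + qc ^ 8 + qc ^ 11 + qc ^ 14 + qc ^ 17) * hq3
lemma hq21 : qc ^ 21 = 1 := by linear_combination (1 + qc ^ 3 + qc ^ 6 + qc ^ 9 + qc ^ 12 + qc ^ 15 + qc ^ 18) * hq3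
lemma hq22 : qc ^ 22 = qc := by linear_combination (qc + qc ^ 4 + qc ^ 7 + qc ^ 10 + qc ^ 13 + qc ^ 16 + qc ^ 19) * hq3
lemma hq23 : qc ^ 23 = qc ^ 2 := by linear_combination (qc ^ 2 + qc ^ 5 + qc ^ 8 + qc ^ 11 + qc ^ 14 + qc ^ 17 + qc ^ 20) * hq3
lemma hq24 : qc ^ 24 = 1 := by linear_combination (1 + qc ^ 3 + qc ^ 6 + qc ^ 9 + qc ^ 12 + qc ^ 15 + qc ^ 18 + qc ^ 21) * hq3
lemma hq25 : qc ^ 25 = qc := by linear_combination (qc + qc ^ 4 + qc ^ 7 + qc ^ 10 + qc ^ 13 + qc ^ 16 + qc ^ 19 + qc ^ 22) * hq3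
lemma hq26 : qc ^ 26 = qc ^ 2 := by linear_combination (qc ^ 2 + qc ^ 5 + qc ^ 8 + qc ^ 11 + qc ^ 14 + qc ^ 17 + qc ^ 20 + qc ^ 23) * hq3
lemma hq27 : qc ^ 27 = 1 := by linear_combination (1 + qc ^ 3 + qc ^ 6 + qc ^ 9 + qc ^ 12 + qc ^ 15 + qc ^ 18 + qc ^ 21 + qc ^ 24) * hq3
lemma hq28 : qc ^ 28 = qc := by linear_combination (qc + qc ^ 4 + qc ^ 7 + qc ^ 10 + qc ^ 13 + qc ^ 16 + qc ^ 19 + qc ^ 22 + qc ^ 25) * hq3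
lemma hq29 : qc ^ 29 = qc ^ 2 := by linear_combination (qc ^ 2 + qc ^ 5 + qc ^ 8 + qc ^ 11 + qc ^ 14 + qc ^ 17 + qc ^ 20 + qc ^ 23 + qc ^ 26) * hq3
lemma hq30 : qc ^ 30 = 1 := by linear_combination (1 + qc ^ 3 + qc ^ 6 + qc ^ 9 + qc ^ 12 + qc ^ 15 + qc ^ 18 + qc ^ 21 + qc ^ 24 + qc ^ 27) * hq3

/-! ### a family of 9-dimensional representations of AF -/

abbrev VF : Type := Fin 3 → Fin 3 → ℂ

def diagOp (W : Fin 3 → Fin 3 → ℂ) : Module.End ℂ VF where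
  toFun f := fun i j => W i j * f i j
  map_add' f g := by funext i j; simp [mul_add]
  map_smul' r f := by funext i j; simp [smul_eq_mul]; ring

def shB : Module.End ℂ VF where
  toFun f := fun i j => if i = 0 then 0 else f (i - 1) j
  map_add' f g := by funext i j; by_cases h : i = 0 <;> simp [h]
  map_smul' r f := by funext i j; by_cases h : i = 0 <;> simp [h]

def shC : Module.End ℂ VF where
  toFun f := fun i j => if j = 0 then 0 else f i (j - 1)
  map_add' f g := by funext i j; by_cases h : j = 0 <;> simp [h]
  map_smul' r f := by funext i j; by_cases h : j = 0 <;> simp [h]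

def repA (lam : ℂ) : Module.End ℂ VF := diagOp (fun i j => lam * qc ^ ((i:ℕ) + (j:ℕ)))
def repD (lam : ℂ) : Module.End ℂ VF :=
  diagOp (fun i j => lam ^ 2 * qc ^ (2 * ((i:ℕ) + (j:ℕ)))) * (1 + qc • (shB * shC))

section EndRelations

variable (lam : ℂ) (hlam : lam ^ 3 = 1)

lemma E_ab : repA lam * shB = qc • (shB * repA lam) := by
  apply LinearMap.ext; intro f; funext i j
  fin_cases i <;> fin_cases j <;>
    simp [repA, repD, diagOp, shB, shC, Module.End.mul_apply] <;> ring_nf <;>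
    simp [hq3, hq4, hq5, hq6, hq7, hq8, hq9, hq10, hq11, hq12, hq13, hq14, hq15, hq16, hq17, hq18, hq19, hq20, hq21, hq22, hq23, hq24, hq25, hq26, hq27, hq28, hq29, hq30, hqsub] <;> ring_nf

lemma E_ac : repA lam * shC = qc • (shC * repA lam) := by
  apply LinearMap.ext; intro f; funext i j
  fin_cases i <;> fin_cases j <;>
    simp [repA, repD, diagOp, shB, shC, Module.End.mul_apply] <;> ring_nf <;>
    simp [hq3, hq4, hq5, hq6, hq7, hq8, hq9, hq10, hq11, hq12, hq13, hq14, hq15, hq16, hq17, hq18, hq19, hq20, hq21, hq22, hq23, hq24, hq25, hq26, hq27, hq28, hq29, hq30, hqsub] <;> ring_nf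

lemma E_bd : shB * repD lam = qc • (repD lam * shB) := by
  apply LinearMap.ext; intro f; funext i j
  fin_cases i <;> fin_cases j <;>
    simp [repA, repD, diagOp, shB, shC, Module.End.mul_apply] <;> ring_nf <;>
    simp [hq3, hq4, hq5, hq6, hq7, hq8, hq9, hq10, hq11, hq12, hq13, hq14, hq15, hq16, hq17, hq18, hq19, hq20, hq21, hq22, hq23, hq24, hq25, hq26, hq27, hq28, hq29, hq30, hqsub] <;> ring_nf

lemma E_bc : shB * shC = shC * shB := by
  apply LinearMap.ext; intro f; funext i j
  fin_cases i <;> fin_cases j <;>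
    simp [shB, shC, Module.End.mul_apply]

lemma E_cd : shC * repD lam = qc • (repD lam * shC) := by
  apply LinearMap.ext; intro f; funext i j
  fin_cases i <;> fin_cases j <;>
    simp [repA, repD, diagOp, shB, shC, Module.End.mul_apply] <;> ring_nf <;>
    simp [hq3, hq4, hq5, hq6, hq7, hq8, hq9, hq10, hq11, hq12, hq13, hq14, hq15, hq16, hq17, hq18, hq19, hq20, hq21, hq22, hq23, hq24, hq25, hq26, hq27, hq28, hq29, hq30, hqsub] <;> ring_nf

include hlam in
lemma E_comm : repA lam * repD lam - repD lam * repA lam = (qc - qc⁻¹) • (shB * shC) := by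
  rw [hqinv]
  apply LinearMap.ext; intro f; funext i j
  have hl4 : lam ^ 4 = lam := by linear_combination lam * hlam
  have hl5 : lam ^ 5 = lam ^ 2 := by linear_combination lam^2 * hlam
  have hl6 : lam ^ 6 = 1 := by linear_combination (lam^3+1) * hlam
  fin_cases i <;> fin_cases j <;>
    simp [repA, repD, diagOp, shB, shC, Module.End.mul_apply] <;> ring_nf <;>
    simp [hq3, hq4, hq5, hq6, hq7, hq8, hq9, hq10, hq11, hq12, hq13, hq14, hq15, hq16, hq17, hq18, hq19, hq20, hq21, hq22, hq23, hq24, hq25, hq26, hq27, hq28, hq29, hq30, hlam, hl4, hl5, hl6, hqsub] <;> ring_nf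

include hlam in
lemma E_det : repA lam * repD lam - qc • (shB * shC) = 1 := by
  apply LinearMap.ext; intro f; funext i j
  have hl4 : lam ^ 4 = lam := by linear_combination lam * hlam
  have hl5 : lam ^ 5 = lam ^ 2 := by linear_combination lam^2 * hlam
  have hl6 : lam ^ 6 = 1 := by linear_combination (lam^3+1) * hlam
  fin_cases i <;> fin_cases j <;>
    simp [repA, repD, diagOp, shB, shC, Module.End.mul_apply, Module.End.one_apply] <;> ring_nf <;>
    simp [hq3, hq4, hq5, hq6, hq7, hq8, hq9, hq10, hq11, hq12, hq13, hq14, hq15, hq16, hq17, hq18, hq19, hq20, hq21, hq22, hq23, hq24, hq25, hq26, hq27, hq28, hq29, hq30, hlam, hl4, hl5, hl6, hqsub] <;> ring_nf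

include hlam in
lemma E_det' : repD lam * repA lam - qc⁻¹ • (shB * shC) = 1 := by
  rw [hqinv]
  apply LinearMap.ext; intro f; funext i j
  have hl4 : lam ^ 4 = lam := by linear_combination lam * hlam
  have hl5 : lam ^ 5 = lam ^ 2 := by linear_combination lam^2 * hlam
  have hl6 : lam ^ 6 = 1 := by linear_combination (lam^3+1) * hlam
  fin_cases i <;> fin_cases j <;>
    simp [repA, repD, diagOp, shB, shC, Module.End.mul_apply, Module.End.one_apply] <;> ring_nf <;>
    simp [hq3, hq4, hq5, hq6, hq7, hq8, hq9, hq10, hq11, hq12, hq13, hq14, hq15, hq16, hq17, hq18, hq19, hq20, hq21, hq22, hq23, hq24, hq25, hq26, hq27, hq28, hq29, hq30, hlam, hl4, hl5, hl6, hqsub] <;> ring_nf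

include hlam in
lemma E_a3 : repA lam * repA lam * repA lam = 1 := by
  apply LinearMap.ext; intro f; funext i j
  have hl4 : lam ^ 4 = lam := by linear_combination lam * hlam
  have hl5 : lam ^ 5 = lam ^ 2 := by linear_combination lam^2 * hlam
  have hl6 : lam ^ 6 = 1 := by linear_combination (lam^3+1) * hlam
  fin_cases i <;> fin_cases j <;>
    simp [repA, diagOp, Module.End.mul_apply, Module.End.one_apply] <;> ring_nf <;>
    simp [hq3, hq4, hq5, hq6, hq7, hq8, hq9, hq10, hq11, hq12, hq13, hq14, hq15, hq16, hq17, hq18, hq19, hq20, hq21, hq22, hq23, hq24, hq25, hq26, hq27, hq28, hq29, hq30, hlam, hl4, hl5, hl6, hqsub] <;> ring_nf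

lemma E_b3 : shB * shB * shB = 0 := by
  apply LinearMap.ext; intro f; funext i j
  fin_cases i <;> fin_cases j <;> simp [shB, Module.End.mul_apply]

lemma E_c3 : shC * shC * shC = 0 := by
  apply LinearMap.ext; intro f; funext i j
  fin_cases i <;> fin_cases j <;> simp [shC, Module.End.mul_apply]

include hlam in
lemma E_d3 : repD lam * repD lam * repD lam = 1 := by
  apply LinearMap.ext; intro f; funext i j
  have hl4 : lam ^ 4 = lam := by linear_combination lam * hlam
  have hl5 : lam ^ 5 = lam ^ 2 := by linear_combination lam^2 * hlam
  have hl6 : lam ^ 6 = 1 := by linear_combination (lam^3+1) * hlam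
  fin_cases i <;> fin_cases j <;>
    simp [repD, diagOp, shB, shC, Module.End.mul_apply, Module.End.one_apply] <;> ring_nf <;>
    simp [hq3, hq4, hq5, hq6, hq7, hq8, hq9, hq10, hq11, hq12, hq13, hq14, hq15, hq16, hq17, hq18, hq19, hq20, hq21, hq22, hq23, hq24, hq25, hq26, hq27, hq28, hq29, hq30, hlam, hl4, hl5, hl6, hqsum, hqsub] <;> ring_nf

end EndRelations

/-! ### the representation as an algebra morphism -/

def repFree (lam : ℂ) : FreeAlgebra ℂ (Fin 4) →ₐ[ℂ] Module.End ℂ VF :=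
  FreeAlgebra.lift ℂ ![repA lam, shB, shC, repD lam]

lemma repFree_ga (lam : ℂ) : repFree lam ga = repA lam := by
  simp [repFree, ga, FreeAlgebra.lift_ι_apply]
lemma repFree_gb (lam : ℂ) : repFree lam gb = shB := by
  simp [repFree, gb, FreeAlgebra.lift_ι_apply]
lemma repFree_gc (lam : ℂ) : repFree lam gc = shC := by
  simp [repFree, gc, FreeAlgebra.lift_ι_apply]
lemma repFree_gd (lam : ℂ) : repFree lam gd = repD lam := by
  simp [repFree, gd, FreeAlgebra.lift_ι_apply]

lemma repFree_compat (lam : ℂ) (hlam : lam ^ 3 = 1) :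
    ∀ ⦃x y : FreeAlgebra ℂ (Fin 4)⦄, SLqRel x y → repFree lam x = repFree lam y := by
  intro x y h
  cases h with
  | ab => simp only [map_mul, map_smul, repFree_ga, repFree_gb]; exact E_ab lam
  | ac => simp only [map_mul, map_smul, repFree_ga, repFree_gc]; exact E_ac lam
  | bd => simp only [map_mul, map_smul, repFree_gb, repFree_gd]; exact E_bd lam
  | bc => simp only [map_mul, repFree_gb, repFree_gc]; exact E_bc
  | cd => simp only [map_mul, map_smul, repFree_gc, repFree_gd]; exact E_cd lam
  | comm => simp only [map_sub, map_mul, map_smul, repFree_ga, repFree_gb, repFree_gc,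
      repFree_gd]; exact E_comm lam hlam
  | det => simp only [map_sub, map_mul, map_smul, map_one, repFree_ga, repFree_gb, repFree_gc,
      repFree_gd]; exact E_det lam hlam
  | det' => simp only [map_sub, map_mul, map_smul, map_one, repFree_ga, repFree_gb, repFree_gc,
      repFree_gd]; exact E_det' lam hlam

def repSL (lam : ℂ) (hlam : lam ^ 3 = 1) : ASLq →ₐ[ℂ] Module.End ℂ VF :=
  RingQuot.liftAlgHom ℂ ⟨repFree lam, repFree_compat lam hlam⟩

lemma repSL_a' (lam : ℂ) (hlam : lam ^ 3 = 1) : repSL lam hlam a' = repA lam := by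
  rw [repSL, a', RingQuot.liftAlgHom_mkAlgHom_apply, repFree_ga]
lemma repSL_b' (lam : ℂ) (hlam : lam ^ 3 = 1) : repSL lam hlam b' = shB := by
  rw [repSL, b', RingQuot.liftAlgHom_mkAlgHom_apply, repFree_gb]
lemma repSL_c' (lam : ℂ) (hlam : lam ^ 3 = 1) : repSL lam hlam c' = shC := by
  rw [repSL, c', RingQuot.liftAlgHom_mkAlgHom_apply, repFree_gc]
lemma repSL_d' (lam : ℂ) (hlam : lam ^ 3 = 1) : repSL lam hlam d' = repD lam := by
  rw [repSL, d', RingQuot.liftAlgHom_mkAlgHom_apply, repFree_gd]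

lemma repSL_compat (lam : ℂ) (hlam : lam ^ 3 = 1) :
    ∀ ⦃x y : ASLq⦄, FRel x y → repSL lam hlam x = repSL lam hlam y := by
  intro x y h
  cases h with
  | a =>
      rw [map_pow, map_one, repSL_a', pow_succ, pow_two]
      exact E_a3 lam hlam
  | b =>
      rw [map_pow, map_zero, repSL_b', pow_succ, pow_two]
      exact E_b3
  | c =>
      rw [map_pow, map_zero, repSL_c', pow_succ, pow_two]
      exact E_c3
  | d =>
      rw [map_pow, map_one, repSL_d', pow_succ, pow_two]
      exact E_d3 lam hlam

def repAF (lam : ℂ) (hlam : lam ^ 3 = 1) : AF →ₐ[ℂ] Module.End ℂ VF :=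
  RingQuot.liftAlgHom ℂ ⟨repSL lam hlam, repSL_compat lam hlam⟩

lemma repAF_ta (lam : ℂ) (hlam : lam ^ 3 = 1) : repAF lam hlam ta = repA lam := by
  rw [repAF, ta, RingQuot.liftAlgHom_mkAlgHom_apply, repSL_a']
lemma repAF_tb (lam : ℂ) (hlam : lam ^ 3 = 1) : repAF lam hlam tb = shB := by
  rw [repAF, tb, RingQuot.liftAlgHom_mkAlgHom_apply, repSL_b']
lemma repAF_tc (lam : ℂ) (hlam : lam ^ 3 = 1) : repAF lam hlam tc = shC := by
  rw [repAF, tc, RingQuot.liftAlgHom_mkAlgHom_apply, repSL_c']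

/-! ### evaluation -/

def e00 : VF := fun i j => if i = 0 ∧ j = 0 then 1 else 0

lemma hlamq : (qc ^ 2) ^ 3 = 1 := by linear_combination (qc^3+1) * hq3

lemma evalL (lam : ℂ) (hlam : lam ^ 3 = 1) :
    ((repAF lam hlam) ((1 + ta + ta ^ 2) * tb ^ 2 * tc ^ 2)) e00 2 2
      = 1 + lam * qc ^ 4 + lam ^ 2 * qc ^ 8 := by
  simp only [map_mul, map_add, map_pow, map_one, repAF_ta lam hlam, repAF_tb lam hlam,
    repAF_tc lam hlam, pow_two]
  simp [repA, diagOp, shB, shC, e00, Module.End.mul_apply, LinearMap.add_apply,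
    Module.End.one_apply]
  try ring

lemma evalR (lam : ℂ) (hlam : lam ^ 3 = 1) :
    ((repAF lam hlam) (tb ^ 2 * tc ^ 2 * (1 + ta + ta ^ 2))) e00 2 2
      = 1 + lam + lam ^ 2 := by
  simp only [map_mul, map_add, map_pow, map_one, repAF_ta lam hlam, repAF_tb lam hlam,
    repAF_tc lam hlam, pow_two]
  simp [repA, diagOp, shB, shC, e00, Module.End.mul_apply, LinearMap.add_apply,
    Module.End.one_apply]
  try ring

lemma LL_ne_zero : ((1 + ta + ta ^ 2) * tb ^ 2 * tc ^ 2 : AF) ≠ 0 := by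
  intro h
  have := evalL (qc ^ 2) hlamq
  rw [h, map_zero] at this
  simp only [LinearMap.zero_apply] at this
  have h2 : (0:ℂ) = 1 + qc ^ 6 + qc ^ 12 := by
    rw [show ((0:VF) 2 2) = 0 from rfl] at this
    linear_combination this
  rw [hq6, hq12] at h2
  norm_num at h2

/-! ### the main theorem -/

/-- `Λ_L = (1 + ã + ã²) b̃² c̃²` is a left integral in `A(F)`, `Λ_R = b̃² c̃² (1 + ã + ã²)`
is a right integral in `A(F)`, `Λ_L` is not a scalar multiple of `Λ_R`, and `ε(Λ_L) = 0`,
so `A(F)` is not a semisimple algebra.  Here `ε` is the counit, determined by `ε(ã) = 1`,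
`ε(b̃) = ε(c̃) = 0`. -/
theorem AF_integrals_in
    (ε : AF →ₐ[ℂ] ℂ) (hεa : ε ta = 1) (hεb : ε tb = 0) (hεc : ε tc = 0) :
    (∀ x : AF, x * ((1 + ta + ta ^ 2) * tb ^ 2 * tc ^ 2) =
      ε x • ((1 + ta + ta ^ 2) * tb ^ 2 * tc ^ 2)) ∧
    (∀ x : AF, (tb ^ 2 * tc ^ 2 * (1 + ta + ta ^ 2)) * x =
      ε x • (tb ^ 2 * tc ^ 2 * (1 + ta + ta ^ 2))) ∧
    (¬ ∃ z : ℂ, (1 + ta + ta ^ 2) * tb ^ 2 * tc ^ 2 =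
      z • (tb ^ 2 * tc ^ 2 * (1 + ta + ta ^ 2))) ∧
    ε ((1 + ta + ta ^ 2) * tb ^ 2 * tc ^ 2) = 0 ∧
    ¬ IsSemisimpleRing AF := by
  have hεd : ε td = 1 := by
    have h := congrArg ε d_eq
    rw [map_mul, map_pow, map_add, map_one, map_smul, map_mul, hεa, hεb, hεc] at h
    simpa using h
  -- surjectivity of pr
  have hsurj : ∀ x : AF, ∃ y, pr y = x := by
    intro x
    obtain ⟨u, hu⟩ := RingQuot.mkAlgHom_surjective ℂ FRel x
    obtain ⟨y, hy⟩ := RingQuot.mkAlgHom_surjective ℂ SLqRel u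
    exact ⟨y, by rw [pr, AlgHom.comp_apply, hy, hu]⟩
  -- the left integral property
  have hL : ∀ x : AF, x * ΛL = ε x • ΛL := by
    intro x
    obtain ⟨y, rfl⟩ := hsurj x
    induction y using FreeAlgebra.induction with
    | grade0 r =>
        simp only [AlgHom.commutes, Algebra.algebraMap_self, RingHom.id_apply]
        rw [Algebra.smul_def]
    | grade1 i =>
        fin_cases i
        · show pr ga * ΛL = ε (pr ga) • ΛL
          rw [pr_ga, hεa, one_smul]; exact La
        · show pr gb * ΛL = ε (pr gb) • ΛL
          rw [pr_gb, hεb, zero_smul]; exact Lb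
        · show pr gc * ΛL = ε (pr gc) • ΛL
          rw [pr_gc, hεc, zero_smul]; exact Lc
        · show pr gd * ΛL = ε (pr gd) • ΛL
          rw [pr_gd, hεd, one_smul]; exact Ld
    | mul u v hu hv =>
        rw [map_mul, map_mul, mul_assoc, hv, mul_smul_comm, hu, smul_smul, mul_comm]
    | add u v hu hv =>
        rw [map_add, map_add, add_mul, hu, hv, add_smul]
  -- the right integral property
  have hR : ∀ x : AF, ΛR * x = ε x • ΛR := by
    intro x
    obtain ⟨y, rfl⟩ := hsurj x
    induction y using FreeAlgebra.induction with
    | grade0 r =>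
        simp only [AlgHom.commutes, Algebra.algebraMap_self, RingHom.id_apply]
        rw [Algebra.smul_def, Algebra.commutes]
    | grade1 i =>
        fin_cases i
        · show ΛR * pr ga = ε (pr ga) • ΛR
          rw [pr_ga, hεa, one_smul]; exact Ra
        · show ΛR * pr gb = ε (pr gb) • ΛR
          rw [pr_gb, hεb, zero_smul]; exact Rb
        · show ΛR * pr gc = ε (pr gc) • ΛR
          rw [pr_gc, hεc, zero_smul]; exact Rc
        · show ΛR * pr gd = ε (pr gd) • ΛR
          rw [pr_gd, hεd, one_smul]; exact Rd
    | mul u v hu hv =>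
        rw [map_mul, map_mul, ← mul_assoc, hu, smul_mul_assoc, hv, smul_smul]
    | add u v hu hv =>
        rw [map_add, map_add, mul_add, hu, hv, add_smul]
  have hεL : ε ((1 + ta + ta ^ 2) * tb ^ 2 * tc ^ 2) = 0 := by
    rw [map_mul, map_mul, map_pow, hεb]
    ring
  refine ⟨fun x => hL x, fun x => hR x, ?_, hεL, ?_⟩
  · -- not a scalar multiple
    rintro ⟨z, hz⟩
    have h1 := congrArg (fun x => ((repAF 1 (one_pow 3) x) e00) 2 2) hz
    simp only [map_smul] at h1
    rw [evalL 1 (one_pow 3)] at h1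
    have h1' : 1 + 1 * qc ^ 4 + 1 ^ 2 * qc ^ 8 =
        z * ((repAF 1 (one_pow 3) (tb ^ 2 * tc ^ 2 * (1 + ta + ta ^ 2))) e00 2 2) := by
      simpa using h1
    rw [evalR 1 (one_pow 3)] at h1'
    have hz0 : z = 0 := by
      have hlhs : 1 + 1 * qc ^ 4 + 1 ^ 2 * qc ^ 8 = 0 := by
        have : qc ^ 4 = qc := hq4
        rw [this, hq8]
        linear_combination hqsum
      rw [hlhs] at h1'
      have : z * 3 = 0 := by linear_combination -h1'
      have h3 : (3:ℂ) ≠ 0 := by norm_num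
      exact (mul_eq_zero.mp this).resolve_right h3
    rw [hz0, zero_smul] at hz
    exact LL_ne_zero hz
  · -- not semisimple
    intro hss
    haveI := hss
    haveI : ComplementedLattice (Submodule AF AF) := hss.toComplementedLattice
    have hL' : ∀ x : AF, x * ΛL = ε x • ΛL := hL
    have hne : (ΛL : AF) ≠ 0 := LL_ne_zero
    have hΛsq : ΛL * ΛL = 0 := by
      rw [hL' ΛL, show ε ΛL = 0 from hεL, zero_smul]
    obtain ⟨J, hJ⟩ := exists_isCompl (Submodule.span AF {ΛL})
    have h1 : (1:AF) ∈ Submodule.span AF {ΛL} ⊔ J := by rw [hJ.sup_eq_top]; trivial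
    obtain ⟨e, he, f, hf, hef⟩ := Submodule.mem_sup.mp h1
    obtain ⟨r, hr⟩ := Submodule.mem_span_singleton.mp he
    have hΛe : ΛL * e = 0 := by
      rw [← hr, smul_eq_mul, hL' r, mul_smul_comm, hΛsq, smul_zero]
    have hΛf : ΛL = ΛL * f := by
      have h2 : ΛL * (e + f) = ΛL := by rw [hef, mul_one]
      rw [mul_add, hΛe, zero_add] at h2
      exact h2.symm
    have hmem : ΛL ∈ Submodule.span AF {ΛL} ⊓ J := by
      refine ⟨Submodule.mem_span_singleton_self ΛL, ?_⟩
      rw [hΛf, ← smul_eq_mul]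
      exact J.smul_mem ΛL hf
    rw [hJ.inf_eq_bot, Submodule.mem_bot] at hmem
    exact hne hmem

end
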